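/- Let H and H̄ be N_U×N_BS complex matrices (the channel at the new RIS configuration and at the fixed-point RIS configuration), Q an N_BS×N_BS complex matrix with P = Q Q^H positive semidefinite (Q playing the role of P^{1/2}), and let D and D̄ be N_U×N_U positive definite Hermitian complex matrices. Define S = H P H^H, S̄ = H̄ P H̄^H, V = H Q, V̄ = H̄ Q. Then log₂ det(I + D^{-1} S) ≥ log₂ det(I + D̄^{-1} S̄) − (1/ln 2) [ Tr(S̄ D̄^{-1}) − 2 Re Tr(V̄^H D̄^{-1} V) + Tr( (D̄^{-1} − (S̄ + D̄)^{-1})^H (S + D) ) ]. -/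

import Mathlib

/-!
This is the weighted-MMSE lower bound. Put `G = 1 + Vᴴ D⁻¹ V`, `W = 1 + V̄ᴴ D̄⁻¹ V̄` and
`A = V Vᴴ + D`, `Ā = V̄ V̄ᴴ + D̄`. By Weinstein–Aronszajn the two rates are `log det G` and
`log det W`, and `log x ≤ x - 1` applied to the eigenvalues of `B G⁻¹ Bᴴ`, where `W = Bᴴ B`,
gives `log det W - log det G ≤ Re tr (W G⁻¹) - k`. By the push-through identity
`G⁻¹ = 1 - Vᴴ A⁻¹ V` is the MMSE error matrix, which lies below the error matrix `E(U)` of any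
linear receiver `U` (complete the square). Evaluating `Re tr (W E(U))` at the MMSE receiver
`U = Ā⁻¹ V̄` of the old configuration, where `U W = D̄⁻¹ V̄`, gives the constant of the bound.
-/

open Matrix
open scoped ComplexOrder

namespace Matrix

variable {n m k : Type*} [Fintype n] [DecidableEq n] [Fintype m] [DecidableEq m] [DecidableEq k]

theorem PosDef.ofReal_re_det {A : Matrix n n ℂ} (hA : A.PosDef) : ((A.det.re : ℝ) : ℂ) = A.det :=
  (Complex.eq_re_of_ofReal_le hA.det_pos.le).symm

theorem PosDef.log_re_det_le {A : Matrix n n ℂ} (hA : A.PosDef) :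
    Real.log A.det.re ≤ A.trace.re - Fintype.card n := by
  have hdet : A.det.re = ∏ i, hA.1.eigenvalues i := by
    rw [hA.1.det_eq_prod_eigenvalues]; norm_cast
  have htr : A.trace.re = ∑ i, hA.1.eigenvalues i := by
    rw [hA.1.trace_eq_sum_eigenvalues]; norm_cast
  rw [hdet, htr, Real.log_prod fun i _ => (hA.eigenvalues_pos i).ne', Fintype.card_eq_sum_ones,
    Nat.cast_sum, Nat.cast_one, ← Finset.sum_sub_distrib]
  exact Finset.sum_le_sum fun i _ => Real.log_le_sub_one_of_pos (hA.eigenvalues_pos i)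

theorem PosSemidef.re_trace_mul_nonneg {W M : Matrix n n ℂ} (hW : W.PosSemidef)
    (hM : M.PosSemidef) : 0 ≤ (W * M).trace.re := by
  open scoped MatrixOrder in
  obtain ⟨B, rfl⟩ := CStarAlgebra.nonneg_iff_eq_star_mul_self.mp hW.nonneg
  rw [star_eq_conjTranspose, Matrix.mul_assoc, trace_mul_comm]
  exact (Complex.nonneg_iff.mp (hM.mul_mul_conjTranspose_same B).trace_nonneg).1

theorem PosDef.log_re_det_sub_log_re_det_le {W G : Matrix n n ℂ} (hW : W.PosDef)
    (hG : G.PosDef) :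
    Real.log W.det.re - Real.log G.det.re ≤ (W * G⁻¹).trace.re - Fintype.card n := by
  open scoped MatrixOrder in
  obtain ⟨B, hB⟩ := CStarAlgebra.nonneg_iff_eq_star_mul_self.mp hW.posSemidef.nonneg
  rw [star_eq_conjTranspose] at hB
  have hBdet : B.det * star B.det = W.det := by
    rw [hB, det_mul, det_conjTranspose, mul_comm]
  have hBunit : IsUnit B := (isUnit_iff_isUnit_det B).mpr <| isUnit_iff_ne_zero.mpr fun h =>
    hW.det_pos.ne' (by rw [← hBdet, h, zero_mul])
  have hP : (B * G⁻¹ * Bᴴ).PosDef :=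
    hG.inv.mul_mul_conjTranspose_same (vecMul_injective_iff_isUnit.mpr hBunit)
  have hPtrace : (B * G⁻¹ * Bᴴ).trace = (W * G⁻¹).trace := by
    rw [trace_mul_cycle, hB]
  have hPdet : (B * G⁻¹ * Bᴴ).det.re * G.det.re = W.det.re := by
    have : (B * G⁻¹ * Bᴴ).det * G.det = W.det := by
      rw [det_mul, det_mul, det_nonsing_inv, ← hBdet, det_conjTranspose, mul_right_comm,
        mul_assoc B.det, Ring.inverse_mul_cancel _ (isUnit_iff_ne_zero.mpr hG.det_pos.ne'), mul_one]
    rw [← hP.ofReal_re_det, ← hG.ofReal_re_det, ← hW.ofReal_re_det] at this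
    exact_mod_cast this
  have hGpos : 0 < G.det.re := (Complex.pos_iff.mp hG.det_pos).1
  have hPpos : 0 < (B * G⁻¹ * Bᴴ).det.re := (Complex.pos_iff.mp hP.det_pos).1
  have hlog := hP.log_re_det_le
  rw [hPtrace] at hlog
  rw [← hPdet, Real.log_mul hPpos.ne' hGpos.ne']
  linarith

section Algebra

variable {α : Type*} [CommRing α]

theorem inv_add_mul_mul_mul_one_add_mul_inv_mul [Fintype k] (B : Matrix m k α)
    (C : Matrix k m α) {D : Matrix m m α} (hD : IsUnit D.det) (hA : IsUnit (B * C + D).det) :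
    (B * C + D)⁻¹ * B * (1 + C * D⁻¹ * B) = D⁻¹ * B := by
  have h : B * (1 + C * D⁻¹ * B) = (B * C + D) * (D⁻¹ * B) := by
    rw [Matrix.add_mul, mul_nonsing_inv_cancel_left D _ hD, Matrix.mul_add, Matrix.mul_one,
      add_comm]
    simp only [Matrix.mul_assoc]
  rw [Matrix.mul_assoc, h, nonsing_inv_mul_cancel_left _ _ hA]

theorem inv_one_add_mul_inv_mul [Fintype k] (B : Matrix m k α) (C : Matrix k m α)
    {D : Matrix m m α} (hD : IsUnit D.det) (hA : IsUnit (B * C + D).det) :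
    (1 + C * D⁻¹ * B)⁻¹ = 1 - C * (B * C + D)⁻¹ * B := by
  have h := congrArg (C * ·) (inv_add_mul_mul_mul_one_add_mul_inv_mul B C hD hA)
  refine inv_eq_left_inv ?_
  simp only [Matrix.sub_mul, Matrix.one_mul, Matrix.mul_assoc] at h ⊢
  rw [h]
  abel

variable [StarRing α]

/-- The error covariance `E[(s - Uᴴ y)(s - Uᴴ y)ᴴ]` of the receiver `U` for `y = V s + z`,
with `E[s sᴴ] = 1` and `E[y yᴴ] = A`. -/
def mseMatrix (A : Matrix m m α) (V U : Matrix m k α) : Matrix k k α :=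
  1 - Uᴴ * V - Vᴴ * U + Uᴴ * A * U

theorem mseMatrix_eq_add {A : Matrix m m α} (hA : A.IsHermitian) (hAu : IsUnit A.det)
    (V U : Matrix m k α) :
    mseMatrix A V U = 1 - Vᴴ * A⁻¹ * V + (U - A⁻¹ * V)ᴴ * A * (U - A⁻¹ * V) := by
  rw [mseMatrix, conjTranspose_sub, conjTranspose_mul, hA.inv.eq]
  simp only [Matrix.sub_mul, Matrix.mul_sub, Matrix.mul_assoc, mul_nonsing_inv_cancel_left A _ hAu,
    nonsing_inv_mul_cancel_left A _ hAu]
  abel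

end Algebra

theorem re_trace_mul_le_re_trace_mul_mseMatrix [Fintype k] {W : Matrix k k ℂ}
    {A : Matrix m m ℂ} (hW : W.PosSemidef) (hA : A.PosDef) (V U : Matrix m k ℂ) :
    (W * (1 - Vᴴ * A⁻¹ * V)).trace.re ≤ (W * mseMatrix A V U).trace.re := by
  rw [mseMatrix_eq_add hA.1 (isUnit_iff_ne_zero.mpr hA.det_pos.ne'), Matrix.mul_add, trace_add,
    Complex.add_re, le_add_iff_nonneg_right]
  exact hW.re_trace_mul_nonneg (hA.posSemidef.conjTranspose_mul_mul_same _)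

theorem re_trace_mul_mseMatrix_eq [Fintype k] (A : Matrix m m ℂ) (V Vb : Matrix m k ℂ)
    {Db : Matrix m m ℂ} (hDb : Db.IsHermitian) (hDbu : IsUnit Db.det)
    (hAbu : IsUnit (Vb * Vbᴴ + Db).det) :
    ((1 + Vbᴴ * Db⁻¹ * Vb) * mseMatrix A V ((Vb * Vbᴴ + Db)⁻¹ * Vb)).trace.re
      = Fintype.card k + (Vb * Vbᴴ * Db⁻¹).trace.re - 2 * (Vbᴴ * Db⁻¹ * V).trace.re
        + ((Db⁻¹ - (Vb * Vbᴴ + Db)⁻¹) * A).trace.re := by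
  set Ab := Vb * Vbᴴ + Db
  set W := 1 + Vbᴴ * Db⁻¹ * Vb
  set U := Ab⁻¹ * Vb
  have hUW : U * W = Db⁻¹ * Vb := inv_add_mul_mul_mul_one_add_mul_inv_mul Vb Vbᴴ hDbu hAbu
  have hWU : W * Uᴴ = Vbᴴ * Db⁻¹ := by
    have hW : W.IsHermitian := isHermitian_one.add (isHermitian_conjTranspose_mul_mul Vb hDb.inv)
    rw [← hW.eq, ← conjTranspose_mul, hUW, conjTranspose_mul, hDb.inv.eq]
  have hDbAb : Db⁻¹ * (Vb * Vbᴴ) * Ab⁻¹ = Db⁻¹ - Ab⁻¹ := by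
    rw [inv_sub_inv (iff_of_true ((isUnit_iff_isUnit_det _).mpr hDbu)
      ((isUnit_iff_isUnit_det _).mpr hAbu)), add_sub_cancel_right]
  have hWtrace : W.trace = Fintype.card k + (Vb * Vbᴴ * Db⁻¹).trace := by
    rw [trace_add, trace_one, trace_mul_cycle, Matrix.mul_assoc]
  have hUV : (W * (Uᴴ * V)).trace = (Vbᴴ * Db⁻¹ * V).trace := by
    rw [← Matrix.mul_assoc, hWU]
  have hVU : (W * (Vᴴ * U)).trace = star (Vbᴴ * Db⁻¹ * V).trace := by
    rw [← trace_conjTranspose, trace_mul_comm, Matrix.mul_assoc, hUW]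
    simp only [conjTranspose_mul, conjTranspose_conjTranspose, hDb.inv.eq, Matrix.mul_assoc]
  have hUAU : (W * (Uᴴ * A * U)).trace = ((Db⁻¹ - Ab⁻¹) * A).trace := by
    have hAb : Ab.IsHermitian := (isHermitian_mul_conjTranspose_self Vb).add hDb
    rw [← Matrix.mul_assoc, trace_mul_cycle, ← Matrix.mul_assoc, hUW, ← hDbAb]
    simp only [U, conjTranspose_mul, hAb.inv.eq, Matrix.mul_assoc]
  rw [mseMatrix, Matrix.mul_add, Matrix.mul_sub, Matrix.mul_sub, Matrix.mul_one, trace_add,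
    trace_sub, trace_sub, hWtrace, hUV, hVU, hUAU]
  simp only [Complex.add_re, Complex.sub_re, Complex.natCast_re, Complex.conj_re, RCLike.star_def]
  ring

theorem sub_le_log_re_det_one_add_inv_mul [Fintype k] {D Db : Matrix m m ℂ} (hD : D.PosDef)
    (hDb : Db.PosDef) (V Vb : Matrix m k ℂ) :
    Real.log (1 + Db⁻¹ * (Vb * Vbᴴ)).det.re
        - ((Vb * Vbᴴ * Db⁻¹).trace.re - 2 * (Vbᴴ * Db⁻¹ * V).trace.re
          + ((Db⁻¹ - (Vb * Vbᴴ + Db)⁻¹)ᴴ * (V * Vᴴ + D)).trace.re)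
      ≤ Real.log (1 + D⁻¹ * (V * Vᴴ)).det.re := by
  have hA : (V * Vᴴ + D).PosDef := hD.posSemidef_add (posSemidef_self_mul_conjTranspose V)
  have hAb : (Vb * Vbᴴ + Db).PosDef := hDb.posSemidef_add (posSemidef_self_mul_conjTranspose Vb)
  have hG : (1 + Vᴴ * D⁻¹ * V).PosDef :=
    PosDef.one.add_posSemidef (hD.inv.posSemidef.conjTranspose_mul_mul_same V)
  have hW : (1 + Vbᴴ * Db⁻¹ * Vb).PosDef :=
    PosDef.one.add_posSemidef (hDb.inv.posSemidef.conjTranspose_mul_mul_same Vb)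
  have hdet (D : Matrix m m ℂ) (V : Matrix m k ℂ) :
      (1 + D⁻¹ * (V * Vᴴ)).det = (1 + Vᴴ * D⁻¹ * V).det := by
    rw [← Matrix.mul_assoc, det_one_add_mul_comm, Matrix.mul_assoc]
  have hGinv : (1 + Vᴴ * D⁻¹ * V)⁻¹ = 1 - Vᴴ * (V * Vᴴ + D)⁻¹ * V :=
    inv_one_add_mul_inv_mul V Vᴴ (isUnit_iff_ne_zero.mpr hD.det_pos.ne')
      (isUnit_iff_ne_zero.mpr hA.det_pos.ne')
  have hherm : (Db⁻¹ - (Vb * Vbᴴ + Db)⁻¹)ᴴ = Db⁻¹ - (Vb * Vbᴴ + Db)⁻¹ :=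
    (hDb.1.inv.sub hAb.1.inv).eq
  have hlog := hW.log_re_det_sub_log_re_det_le hG
  have hmse := re_trace_mul_le_re_trace_mul_mseMatrix hW.posSemidef hA V
    ((Vb * Vbᴴ + Db)⁻¹ * Vb)
  rw [hGinv] at hlog
  rw [re_trace_mul_mseMatrix_eq _ V Vb hDb.1 (isUnit_iff_ne_zero.mpr hDb.det_pos.ne')
    (isUnit_iff_ne_zero.mpr hAb.det_pos.ne')] at hmse
  rw [hdet, hdet, hherm]
  linarith

end Matrix

/-- Corollary 2 (concave lower bound on the per-subband TIN rate for the RIS update):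
with `P = Q Qᴴ`, `S = H P Hᴴ`, `S̄ = H̄ P H̄ᴴ`, `V = H Q`, `V̄ = H̄ Q`,
`log₂ det(I + D⁻¹ S) ≥ log₂ det(I + D̄⁻¹ S̄) − (1/ln 2) [ Tr(S̄ D̄⁻¹)
  − 2 Re Tr(V̄ᴴ D̄⁻¹ V) + Tr((D̄⁻¹ − (S̄ + D̄)⁻¹)ᴴ (S + D)) ]`. -/
theorem rate_lower_bound_ris_update
    (NU NBS : ℕ)
    (H Hbar : Matrix (Fin NU) (Fin NBS) ℂ)
    (Q : Matrix (Fin NBS) (Fin NBS) ℂ)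
    (D Dbar : Matrix (Fin NU) (Fin NU) ℂ)
    (hD : D.PosDef) (hDbar : Dbar.PosDef) :
    Real.logb 2 ((1 + D⁻¹ * (H * (Q * Qᴴ) * Hᴴ)).det.re)
      ≥ Real.logb 2 ((1 + Dbar⁻¹ * (Hbar * (Q * Qᴴ) * Hbarᴴ)).det.re)
        - (1 / Real.log 2) *
          ((Matrix.trace ((Hbar * (Q * Qᴴ) * Hbarᴴ) * Dbar⁻¹)).re
            - 2 * (Matrix.trace ((Hbar * Q)ᴴ * Dbar⁻¹ * (H * Q))).re
            + (Matrix.trace ((Dbar⁻¹ - ((Hbar * (Q * Qᴴ) * Hbarᴴ) + Dbar)⁻¹)ᴴ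
                * ((H * (Q * Qᴴ) * Hᴴ) + D))).re) := by
  have hS (G : Matrix (Fin NU) (Fin NBS) ℂ) : G * (Q * Qᴴ) * Gᴴ = G * Q * (G * Q)ᴴ := by
    rw [conjTranspose_mul]; simp only [Matrix.mul_assoc]
  rw [hS H, hS Hbar, ge_iff_le, Real.logb, Real.logb, one_div_mul_eq_div, ← sub_div]
  exact div_le_div_of_nonneg_right (sub_le_log_re_det_one_add_inv_mul hD hDbar _ _)
    (Real.log_pos one_lt_two).le
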